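/- Let k be a real number, x a point of ℝ³, c a complex number, and ε > 0. Suppose there exists M ≥ 0 such that for all z ∈ ℝ³ with 0 < ‖z − x‖ < ε one has ‖exp(i·k·‖z−x‖)/(4π·‖z−x‖) − c · exp(−i·k·‖z−x‖)/(4π·‖z−x‖)‖ ≤ M. Then c = 1. -/

import Mathlib

/-!
Multiplying by `4π‖z - x‖`, the hypothesis says that `g(t) = e^{ikt} - c e^{-ikt}` satisfies
`‖g t‖ ≤ 4πM t` for small `t > 0`. Since `g` is continuous with `g 0 = 1 - c`, letting `t → 0⁺`
gives `1 - c = 0`.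
-/

open Filter Topology

lemma eq_zero_of_tendsto_nhdsGT_of_norm_le_mul {E : Type*} [NormedAddCommGroup E]
    {g : ℝ → E} {a : E} (hg : Tendsto g (𝓝[>] 0) (𝓝 a)) {C : ℝ}
    (hbound : ∀ᶠ t in 𝓝[>] 0, ‖g t‖ ≤ C * t) : a = 0 := by
  have hlin : Tendsto (fun t : ℝ => C * t) (𝓝[>] 0) (𝓝 0) := by
    simpa using ((continuous_const_mul C).tendsto 0).mono_left nhdsWithin_le_nhds
  exact norm_le_zero_iff.mp (le_of_tendsto_of_tendsto hg.norm hlin hbound)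

lemma norm_div_sub_mul_div {𝕜 : Type*} [NormedField 𝕜] (a b c D : 𝕜) :
    ‖a / D - c * (b / D)‖ = ‖a - c * b‖ / ‖D‖ := by
  rw [mul_div_assoc', ← sub_div, norm_div]

lemma norm_four_mul_pi_mul_ofReal {r : ℝ} (hr : 0 ≤ r) :
    ‖4 * (Real.pi : ℂ) * (r : ℂ)‖ = 4 * Real.pi * r := by
  rw [show 4 * (Real.pi : ℂ) * (r : ℂ) = ((4 * Real.pi * r : ℝ) : ℂ) by push_cast; ring,
    Complex.norm_real, Real.norm_of_nonneg (by positivity)]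

lemma tendsto_exp_sub_mul_exp_nhdsGT (k : ℝ) (c : ℂ) :
    Tendsto (fun t : ℝ => Complex.exp (Complex.I * k * t) - c * Complex.exp (-Complex.I * k * t))
      (𝓝[>] 0) (𝓝 (1 - c)) := by
  have hcont : Continuous fun t : ℝ =>
      Complex.exp (Complex.I * k * t) - c * Complex.exp (-Complex.I * k * t) := by
    fun_prop
  simpa using (hcont.tendsto 0).mono_left nhdsWithin_le_nhds

/-- If `Φ(z,x) - c · conj(Φ(z,x))` is bounded on a punctured ball around `x`, where
`Φ(z,x) = exp(ik‖z-x‖)/(4π‖z-x‖)`, then `c = 1`. -/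
theorem coeff_one_of_bounded_diff_fundamental_solution (k : ℝ)
    (x : EuclideanSpace ℝ (Fin 3)) (c : ℂ) (ε : ℝ) (hε : 0 < ε)
    (h : ∃ M : ℝ, 0 ≤ M ∧ ∀ z : EuclideanSpace ℝ (Fin 3),
      0 < ‖z - x‖ → ‖z - x‖ < ε →
      ‖Complex.exp (Complex.I * (k : ℂ) * (‖z - x‖ : ℂ)) /
          (4 * (Real.pi : ℂ) * (‖z - x‖ : ℂ)) -
        c * (Complex.exp (-Complex.I * (k : ℂ) * (‖z - x‖ : ℂ)) /
          (4 * (Real.pi : ℂ) * (‖z - x‖ : ℂ)))‖ ≤ M) :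
    c = 1 := by
  obtain ⟨M, -, hM⟩ := h
  have hbound : ∀ᶠ t : ℝ in 𝓝[>] 0,
      ‖Complex.exp (Complex.I * k * t) - c * Complex.exp (-Complex.I * k * t)‖ ≤
        (4 * Real.pi * M) * t := by
    filter_upwards [Ioo_mem_nhdsGT hε] with t ⟨ht0, htε⟩
    obtain ⟨y, hy⟩ := exists_norm_eq (EuclideanSpace ℝ (Fin 3)) ht0.le
    have hzx : ‖(x + y) - x‖ = t := by rw [add_sub_cancel_left, hy]
    have hzM := hM (x + y) (hzx ▸ ht0) (hzx ▸ htε)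
    rw [hzx, norm_div_sub_mul_div, norm_four_mul_pi_mul_ofReal ht0.le,
      div_le_iff₀ (by positivity)] at hzM
    linarith
  exact (sub_eq_zero.mp
    (eq_zero_of_tendsto_nhdsGT_of_norm_le_mul (tendsto_exp_sub_mul_exp_nhdsGT k c) hbound)).symm
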